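/- arXiv:math-ph/0212035 — 3 statements merged into one kernel-verified Lean document; each statement's English description precedes it below -/
import Mathlib

section
/- For the simple symmetric random walk of length N on Z^2 and any integer α-exponent scheme, let m = [N^{1/3}] and consider the event that the walk returns to the origin at all times k·4m for k = 1, …, ⌊N/(4m)⌋. The probability of this event is at least (K·m^{−3/2})^{N/(4m)} for the constant K from the local return probability bound, and on this event the range satisfies R_N ≤ 16 m² + 2m. -/
open Finset

/-- The unit step of a simple walk on `ℤ^n` given a direction `d`. -/
def stepVec (n : ℕ) (d : Fin n × Bool) : Fin n → ℤ :=
  fun j => if j = d.1 then (if d.2 then 1 else -1) else 0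

/-- Position after `i` steps of the walk encoded by the step sequence `s`. -/
def pos {n N : ℕ} (s : Fin N → Fin n × Bool) (i : ℕ) : Fin n → ℤ :=
  ∑ k ∈ Finset.univ.filter (fun k : Fin N => (k : ℕ) < i), stepVec n (s k)

/-- Contact matrix: `1` iff positions at distinct times agree. -/
def cm {n N : ℕ} (s : Fin N → Fin n × Bool) : Fin (N + 1) → Fin (N + 1) → Bool :=
  fun i j => decide ((i : ℕ) ≠ (j : ℕ) ∧ pos s i = pos s j)

/-- Degeneracy: number of walks of length `N` sharing the contact matrix of `s`. -/
def degC {n N : ℕ} (s : Fin N → Fin n × Bool) : ℕ :=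
  (Finset.univ.filter (fun s' : Fin N → Fin n × Bool => cm s' = cm s)).card

/-- Range: number of distinct sites visited. -/
def rangeRW {n N : ℕ} (s : Fin N → Fin n × Bool) : ℕ :=
  (Finset.univ.image (fun i : Fin (N + 1) => pos s (i : ℕ))).card

/-- Number of contact matrices realized by walks of length `N` on `ℤ^n`. -/
def W (n N : ℕ) : ℕ :=
  (Finset.univ.image (fun s : Fin N → Fin n × Bool => cm s)).card

noncomputable def gammaRW (n N : ℕ) : ℝ :=
  Real.log (W n N) / (N * Real.log (2 * n))

/-- Coarse-grained Shannon entropy of the contact-matrix partition, uniform measure. -/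
noncomputable def SC (n N : ℕ) : ℝ :=
  ∑ C : Fin (N + 1) → Fin (N + 1) → Bool,
    Real.negMulLog
      (((Finset.univ.filter (fun s : Fin N → Fin n × Bool => cm s = C)).card : ℝ) / (2 * n) ^ N)

noncomputable def deltaRW (n N : ℕ) : ℝ :=
  SC n N / (N * Real.log (2 * n))

/-- Expected range under the uniform measure. -/
noncomputable def ER (n N : ℕ) : ℝ :=
  (∑ s : Fin N → Fin n × Bool, (rangeRW s : ℝ)) / (2 * n) ^ N

/-!
Cut the walk into `⌊N / 4m⌋` blocks of length `4m` followed by a tail of fewer than `4m` steps.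
Every walk whose blocks each return to the origin lies in the event, so its probability is at
least `P(ω(4m) = 0) ^ ⌊N / 4m⌋ ≥ (K m^{-3/2}) ^ (N / 4m)`, the base being at most `1`.
On the event every position up to the last block boundary is within `ℓ¹`-distance `2m` of a
return, hence in the `ℓ¹`-ball of radius `2m`, which has `(2m + 1)² + (2m)²` points; the tail
adds fewer than `4m` further sites.
-/

section Walk

variable {n N : ℕ}

lemma pos_zero (s : Fin N → Fin n × Bool) : pos s 0 = 0 := by
  simp [pos]

lemma pos_succ (s : Fin N → Fin n × Bool) {i : ℕ} (hi : i < N) :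
    pos s (i + 1) = pos s i + stepVec n (s ⟨i, hi⟩) := by
  unfold pos
  have hmem : (⟨i, hi⟩ : Fin N) ∈ univ.filter fun k : Fin N => (k : ℕ) < i + 1 := by simp
  rw [← sum_erase_add _ _ hmem]
  congr 2
  ext k
  simp only [mem_erase, mem_filter, mem_univ, true_and, ne_eq, Fin.ext_iff]
  omega

lemma pos_succ_of_le (s : Fin N → Fin n × Bool) {i : ℕ} (hi : N ≤ i) :
    pos s (i + 1) = pos s i := by
  unfold pos
  congr 1
  ext k
  simp only [mem_filter, mem_univ, true_and]
  omega

lemma sum_abs_stepVec (d : Fin n × Bool) : ∑ l, |stepVec n d l| = 1 := by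
  rcases d with ⟨j, _ | _⟩ <;> simp [stepVec, apply_ite abs]

lemma sum_abs_pos_succ_sub_le (s : Fin N → Fin n × Bool) (i : ℕ) :
    ∑ l, |pos s (i + 1) l - pos s i l| ≤ 1 := by
  by_cases hi : i < N
  · simp [pos_succ s hi, sum_abs_stepVec]
  · simp [pos_succ_of_le s (not_lt.1 hi)]

lemma sum_abs_pos_add_sub_le (s : Fin N → Fin n × Bool) (i j : ℕ) :
    ∑ l, |pos s (i + j) l - pos s i l| ≤ j := by
  induction j with
  | zero => simp
  | succ j ih =>
    calc ∑ l, |pos s (i + j + 1) l - pos s i l|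
        ≤ ∑ l, (|pos s (i + j + 1) l - pos s (i + j) l| + |pos s (i + j) l - pos s i l|) :=
          sum_le_sum fun l _ => abs_sub_le _ _ _
      _ ≤ 1 + j := by
          rw [sum_add_distrib]
          exact add_le_add (sum_abs_pos_succ_sub_le s _) ih
      _ = ↑(j + 1) := by push_cast; ring

lemma pos_append {b : ℕ} (t : Fin b → Fin n × Bool) (s : Fin N → Fin n × Bool) (i : ℕ) :
    pos (Fin.append t s) (b + i) = pos t b + pos s i := by
  simp only [pos, sum_filter, Fin.sum_univ_add, Fin.append_left, Fin.append_right,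
    Fin.val_castAdd, Fin.val_natAdd]
  congr 1
  · refine sum_congr rfl fun k _ => ?_
    simp [k.isLt, Nat.lt_add_right i k.isLt]
  · simp

end Walk

def closedWalks (n b : ℕ) : Finset (Fin b → Fin n × Bool) :=
  univ.filter fun t => pos t b = 0

open Classical in
noncomputable def returnEvent (n b N : ℕ) : Finset (Fin N → Fin n × Bool) :=
  univ.filter fun s => ∀ k, 1 ≤ k → k * b ≤ N → pos s (k * b) = 0

section ReturnEvent

variable {n b N : ℕ}

lemma mem_returnEvent {s : Fin N → Fin n × Bool} :
    s ∈ returnEvent n b N ↔ ∀ k, 1 ≤ k → k * b ≤ N → pos s (k * b) = 0 := by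
  simp [returnEvent]

lemma pos_mul_eq_zero_of_mem_returnEvent {s : Fin N → Fin n × Bool}
    (hs : s ∈ returnEvent n b N) {k : ℕ} (hk : k * b ≤ N) : pos s (k * b) = 0 := by
  rcases Nat.eq_zero_or_pos k with rfl | hk1
  · simpa using pos_zero s
  · exact mem_returnEvent.1 hs k hk1 hk

lemma returnEvent_eq_univ (hN : N < b) : returnEvent n b N = univ :=
  eq_univ_of_forall fun _ => mem_returnEvent.2 fun _ hk1 hkN =>
    absurd (hkN.trans_lt hN) (not_lt.2 (Nat.le_mul_of_pos_left b hk1))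

lemma append_mem_returnEvent {t : Fin b → Fin n × Bool} {s : Fin N → Fin n × Bool}
    (ht : pos t b = 0) (hs : s ∈ returnEvent n b N) :
    Fin.append t s ∈ returnEvent n b (b + N) := by
  refine mem_returnEvent.2 fun _ hk1 hkN => ?_
  obtain ⟨k, rfl⟩ := Nat.exists_eq_add_of_le' hk1
  rw [add_one_mul, add_comm (k * b) b, pos_append, ht,
    pos_mul_eq_zero_of_mem_returnEvent hs (by rw [add_one_mul] at hkN; omega), add_zero]

lemma card_mul_card_returnEvent_le :
    #(closedWalks n b) * #(returnEvent n b N)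
      ≤ #(returnEvent n b (b + N)) := by
  rw [← card_product, ← card_map (Fin.appendEquiv b N).toEmbedding]
  refine card_le_card fun s hs => ?_
  obtain ⟨⟨t, s⟩, hts, rfl⟩ := mem_map.1 hs
  obtain ⟨ht, hs⟩ := mem_product.1 hts
  exact append_mem_returnEvent (mem_filter.1 ht).2 hs

lemma card_returnEvent_ge (hb : 0 < b) :
    #(closedWalks n b) ^ (N / b) * (2 * n) ^ (N % b)
      ≤ #(returnEvent n b N) := by
  suffices h : ∀ q r, r < b →
      #(closedWalks n b) ^ q * (2 * n) ^ r
        ≤ #(returnEvent n b (q * b + r)) by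
    have := h (N / b) (N % b) (Nat.mod_lt N hb)
    rwa [Nat.div_add_mod'] at this
  intro q r hr
  induction q with
  | zero =>
    rw [zero_mul, zero_add, returnEvent_eq_univ hr]
    simp [mul_comm]
  | succ q ih =>
    rw [pow_succ', mul_assoc, show (q + 1) * b + r = b + (q * b + r) by ring]
    exact (Nat.mul_le_mul_left _ ih).trans card_mul_card_returnEvent_le

end ReturnEvent

lemma rpow_le_card_returnEvent_div {n b : ℕ} (N : ℕ) (hn : 0 < n) (hb : 0 < b) {c : ℝ}
    (hc0 : 0 < c)
    (hc : c ≤ #(closedWalks n b) / (2 * n : ℝ) ^ b) :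
    c ^ ((N : ℝ) / b) ≤ #(returnEvent n b N) / (2 * n : ℝ) ^ N := by
  set A := #(closedWalks n b)
  have hA : (A : ℝ) ≤ (2 * n : ℝ) ^ b := by
    have : A ≤ Fintype.card (Fin b → Fin n × Bool) := card_filter_le _ _
    rw [Fintype.card_fun, Fintype.card_prod] at this
    simpa [mul_comm] using (Nat.cast_le (α := ℝ)).2 this
  have hc1 : c ≤ 1 := hc.trans (div_le_one_of_le₀ hA (by positivity))
  have h2n : (0 : ℝ) < 2 * n := by positivity
  calc c ^ ((N : ℝ) / b)
      ≤ c ^ (N / b) := by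
        rw [← Real.rpow_natCast]
        exact Real.rpow_le_rpow_of_exponent_ge hc0 hc1 Nat.cast_div_le
    _ ≤ (A / (2 * n : ℝ) ^ b) ^ (N / b) := pow_le_pow_left₀ hc0.le hc _
    _ = A ^ (N / b) * (2 * n : ℝ) ^ (N % b) / (2 * n : ℝ) ^ N := by
        rw [div_pow, ← pow_mul, ← mul_div_mul_right _ _ (pow_pos h2n (N % b)).ne', ← pow_add,
          Nat.div_add_mod]
    _ ≤ #(returnEvent n b N) / (2 * n : ℝ) ^ N := by
        gcongr
        exact_mod_cast card_returnEvent_ge hb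

lemma sum_abs_pos_le_of_mem_returnEvent {n b N : ℕ} {s : Fin N → Fin n × Bool}
    (hs : s ∈ returnEvent n b N) {i : ℕ} (hi : i ≤ N / b * b) :
    ∑ l, |pos s i l| ≤ (b / 2 : ℕ) := by
  have hdecomp := Nat.div_add_mod' i b
  have hNb := Nat.div_mul_le_self N b
  rcases le_or_gt (i % b) (b / 2) with hle | hgt
  · -- the last return before time `i` is at most `b / 2` steps back
    have h := sum_abs_pos_add_sub_le s (i / b * b) (i % b)
    rw [hdecomp, pos_mul_eq_zero_of_mem_returnEvent hs (by omega)] at h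
    simpa using h.trans (by exact_mod_cast hle)
  · -- the next return after time `i` is at most `b / 2` steps ahead
    have hb : 0 < b := Nat.pos_of_ne_zero (by rintro rfl; simp_all)
    have hmod := Nat.mod_lt i hb
    have hq : i / b * b < N / b * b := by omega
    have hnext : (i / b + 1) * b ≤ N / b * b :=
      Nat.mul_le_mul_right b (Nat.lt_of_mul_lt_mul_right hq)
    have h := sum_abs_pos_add_sub_le s i (b - i % b)
    rw [show i + (b - i % b) = (i / b + 1) * b by rw [add_one_mul]; omega,
      pos_mul_eq_zero_of_mem_returnEvent hs (by omega)] at h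
    simpa [abs_neg] using h.trans (by exact_mod_cast (by omega : b - i % b ≤ b / 2))

lemma card_le_of_forall_sum_abs_le {S : Finset (Fin 2 → ℤ)} {R : ℕ}
    (hS : ∀ v ∈ S, ∑ l, |v l| ≤ R) : #S ≤ (R + 1) ^ 2 + R ^ 2 := by
  -- The ball `|x| + |y| ≤ R` splits by the parity of `x + y + R` into two square grids.
  let φ (e : ℤ) (p : ℤ × ℤ) : Fin 2 → ℤ := ![p.1 - p.2, p.1 + p.2 - R + e]
  have hsub : S ⊆ (Icc 0 (R : ℤ) ×ˢ Icc 0 (R : ℤ)).image (φ 0) ∪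
      (Icc 0 (R - 1 : ℤ) ×ˢ Icc 0 (R - 1 : ℤ)).image (φ 1) := by
    intro v hv
    have h := hS v hv
    rw [Fin.sum_univ_two] at h
    have h₁ := abs_le.1 ((abs_add_le (v 0) (v 1)).trans h)
    have h₂ := abs_le.1 ((abs_sub (v 0) (v 1)).trans h)
    have hv : v = ![v 0, v 1] := by ext l; fin_cases l <;> rfl
    rcases Int.emod_two_eq_zero_or_one (v 0 + v 1 + R) with he | ho
    · refine mem_union_left _
        (mem_image.2 ⟨((v 0 + v 1 + R) / 2, (v 1 - v 0 + R) / 2), ?_, ?_⟩)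
      · simp only [mem_product, mem_Icc]; omega
      · rw [hv]; ext l; fin_cases l <;> simp [φ] <;> omega
    · refine mem_union_right _
        (mem_image.2 ⟨((v 0 + v 1 + R - 1) / 2, (v 1 - v 0 + R - 1) / 2), ?_, ?_⟩)
      · simp only [mem_product, mem_Icc]; omega
      · rw [hv]; ext l; fin_cases l <;> simp [φ] <;> omega
  calc #S ≤ _ := card_le_card hsub
    _ ≤ _ := card_union_le _ _
    _ ≤ (R + 1) ^ 2 + R ^ 2 := by
        gcongr <;> refine card_image_le.trans ?_ <;> simp [sq]

lemma rangeRW_le_of_mem_returnEvent {b N : ℕ} {s : Fin N → Fin 2 × Bool}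
    (hs : s ∈ returnEvent 2 b N) : rangeRW s ≤ (b / 2 + 1) ^ 2 + (b / 2) ^ 2 + N % b := by
  set T := N / b * b
  have hT : T + N % b = N := Nat.div_add_mod' N b
  have hsub : univ.image (fun i : Fin (N + 1) => pos s i) ⊆
      (range (T + 1)).image (pos s) ∪ (Ioc T N).image (pos s) := by
    intro v hv
    obtain ⟨i, -, rfl⟩ := mem_image.1 hv
    rcases le_or_gt (i : ℕ) T with h | h
    · exact mem_union_left _ (mem_image_of_mem _ (mem_range.2 (by omega)))
    · exact mem_union_right _ (mem_image_of_mem _ (mem_Ioc.2 ⟨h, by omega⟩))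
  have hball : #((range (T + 1)).image (pos s)) ≤ (b / 2 + 1) ^ 2 + (b / 2) ^ 2 := by
    refine card_le_of_forall_sum_abs_le fun v hv => ?_
    obtain ⟨i, hi, rfl⟩ := mem_image.1 hv
    exact sum_abs_pos_le_of_mem_returnEvent hs (by rw [mem_range] at hi; omega)
  have htail : #((Ioc T N).image (pos s)) ≤ N % b :=
    card_image_le.trans (by rw [Nat.card_Ioc]; omega)
  exact (card_le_card hsub).trans ((card_union_le _ _).trans (add_le_add hball htail))

/-- Let `m = ⌊N^{1/3}⌋` and `K > 0` be a constant with
`P(walk of length 4M returns to 0) ≥ K M^{-3/2}` for all `M ≥ 1`. Then the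
event that a walk of length `N` on `ℤ²` returns to the origin at all times
`k·4m`, `1 ≤ k`, `k·4m ≤ N`, has probability at least
`(K m^{-3/2})^{N/(4m)}`, and on this event the range is at most
`16 m² + 2m`. -/
theorem periodic_return_event_bound (N : ℕ) (hN : 1 ≤ N)
    (m : ℕ) (hm : m = Nat.floor ((N : ℝ) ^ ((1 : ℝ) / 3)))
    (K : ℝ) (hK0 : 0 < K)
    (hK : ∀ M : ℕ, 1 ≤ M →
      (((Finset.univ.filter
          (fun s : Fin (4 * M) → Fin 2 × Bool => pos s (4 * M) = 0)).card : ℝ)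
            / 4 ^ (4 * M)) ≥ K * (M : ℝ) ^ (-(3 / 2 : ℝ)))
    (E : Finset (Fin N → Fin 2 × Bool))
    (hE : ∀ s : Fin N → Fin 2 × Bool,
      s ∈ E ↔ ∀ k : ℕ, 1 ≤ k → k * (4 * m) ≤ N → pos s (k * (4 * m)) = 0) :
    ((E.card : ℝ) / 4 ^ N
        ≥ (K * (m : ℝ) ^ (-(3 / 2 : ℝ))) ^ ((N : ℝ) / (4 * m))) ∧
      ∀ s ∈ E, rangeRW s ≤ 16 * m ^ 2 + 2 * m := by
  have hm1 : 1 ≤ m := by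
    rw [hm]
    exact Nat.le_floor (by simpa using Real.one_le_rpow (by exact_mod_cast hN) (by norm_num))
  have hb : 0 < 4 * m := by omega
  have hE' : E = returnEvent 2 (4 * m) N := by
    ext s
    rw [hE, mem_returnEvent]
  subst hE'
  refine ⟨?_, fun s hs => ?_⟩
  · have h := rpow_le_card_returnEvent_div N two_pos hb (c := K * (m : ℝ) ^ (-(3 / 2 : ℝ)))
      (by positivity)
      (by norm_num; exact hK m hm1)
    norm_num at h
    exact_mod_cast h
  · have hr := Nat.mod_lt N hb
    calc rangeRW s ≤ (4 * m / 2 + 1) ^ 2 + (4 * m / 2) ^ 2 + N % (4 * m) :=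
          rangeRW_le_of_mem_returnEvent hs
      _ ≤ 16 * m ^ 2 + 2 * m := by
          rw [show 4 * m / 2 = 2 * m by omega]
          nlinarith
end

section
/- For simple random walks on Z^2, there exists a constant κ > 0 such that for all large N, γ_N ≥ 1 − κ (ln N)/N^{1/3}, where γ_N = ln W(N)/(N ln 4) and W(N) is the number of contact matrices of walks of length N. In particular γ_N → 1 as N → ∞. -/
open Finset

/-!
A contact matrix determines a walk up to its steps at the times it enters a new site, so at most
`4 ^ R` walks of range `R` share it, and `W(N) ≥ #{walks of range ≤ r} / 4 ^ r`. Walks of small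
range come from concatenating closed blocks of length `2k`: in the rotated coordinates `x ± y` a
walk on `ℤ²` is a pair of walks on `ℤ`, so there are `C(2k, k)² ≥ (4 ^ k / 2k)²` closed blocks, and
their concatenation stays in `[-2k, 2k]²`. Hence `log W(N) ≥ N log 4 - O(k² + (N / k) log k)`, and
`k = ⌊N^{1/3}⌋` gives the bound; `γ_N ≤ 1` is trivial.
-/

section Walk

variable {n N : ℕ}

lemma stepVec_injective (n : ℕ) : Function.Injective (stepVec n) := by
  rintro ⟨a, u⟩ ⟨b, v⟩ h
  have ha := congrFun h a
  by_cases hab : a = b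
  · subst hab
    cases u <;> cases v <;> simp_all [stepVec]
  · cases u <;> simp [stepVec, hab] at ha

lemma abs_stepVec_le (d : Fin n × Bool) (c : Fin n) : |stepVec n d c| ≤ 1 := by
  unfold stepVec
  split_ifs <;> simp

lemma pos_add (s : Fin N → Fin n × Bool) (a t : ℕ) (h : a + t ≤ N) :
    pos s (a + t) = pos s a + ∑ o : Fin t, stepVec n (s ⟨a + o, by omega⟩) := by
  induction t with
  | zero => simp
  | succ t ih =>
    rw [← add_assoc, pos_succ s (by omega), ih (by omega), Fin.sum_univ_castSucc, add_assoc]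
    rfl

lemma abs_pos_sub_pos_le (s : Fin N → Fin n × Bool) (c : Fin n) {i j : ℕ} (hij : i ≤ j) :
    |pos s j c - pos s i c| ≤ (j - i : ℕ) := by
  induction j, hij using Nat.le_induction with
  | base => simp
  | succ j hij ih =>
    have hstep : |pos s (j + 1) c - pos s j c| ≤ 1 := by
      rcases lt_or_ge j N with hj | hj
      · simpa [pos_succ s hj] using abs_stepVec_le (s ⟨j, hj⟩) c
      · simp [pos_succ_of_le s hj]
    calc |pos s (j + 1) c - pos s i c|
        ≤ |pos s (j + 1) c - pos s j c| + |pos s j c - pos s i c| := abs_sub_le _ _ _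
      _ ≤ 1 + (j - i : ℕ) := add_le_add hstep ih
      _ = (j + 1 - i : ℕ) := by push_cast [Nat.sub_add_comm hij]; ring

lemma eq_of_pos_eq {s s' : Fin N → Fin n × Bool} (h : ∀ i ≤ N, pos s i = pos s' i) :
    s = s' := by
  funext k
  apply stepVec_injective n
  have hk := h (k + 1) k.2
  rwa [pos_succ s k.2, pos_succ s' k.2, h k k.2.le, add_right_inj] at hk

lemma W_pos (hn : 0 < n) (N : ℕ) : 0 < W n N :=
  card_pos.2 (image_nonempty.2 ⟨fun _ => (⟨0, hn⟩, true), mem_univ _⟩)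

lemma W_le_pow (n N : ℕ) : W n N ≤ (2 * n) ^ N :=
  card_image_le.trans (by simp [mul_comm])

end Walk

section Degeneracy

variable {n N : ℕ}

def freshTimes (s : Fin N → Fin n × Bool) : Finset (Fin N) :=
  univ.filter fun i => ∀ j ≤ (i : ℕ), pos s (i + 1) ≠ pos s j

lemma card_freshTimes_le_rangeRW (s : Fin N → Fin n × Bool) :
    #(freshTimes s) ≤ rangeRW s := by
  refine card_le_card_of_injOn (fun i => pos s (i + 1))
    (fun i _ => mem_image.2 ⟨⟨i + 1, by omega⟩, mem_univ _, rfl⟩) ?_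
  intro i hi i' hi' hpos
  simp only [freshTimes, coe_filter, Set.mem_ofPred_eq] at hi hi'
  by_contra hne
  rcases lt_or_gt_of_ne (Fin.val_injective.ne hne) with hlt | hlt
  · exact hi'.2 (i + 1) hlt hpos.symm
  · exact hi.2 (i' + 1) hlt hpos

lemma pos_eq_pos_iff_of_cm_eq {s s' : Fin N → Fin n × Bool} (h : cm s = cm s')
    {i j : ℕ} (hi : i ≤ N) (hj : j ≤ N) : pos s i = pos s j ↔ pos s' i = pos s' j := by
  rcases eq_or_ne i j with rfl | hij
  · simp
  have := congrFun₂ h ⟨i, by omega⟩ ⟨j, by omega⟩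
  simpa [cm, hij] using this

/-- Every step of `s₁` at a time that is not fresh for `s` leads to a site visited before, and the
contact matrix says which one. -/
lemma eq_of_cm_eq_of_eqOn_freshTimes {s s₁ s₂ : Fin N → Fin n × Bool}
    (h₁ : cm s₁ = cm s) (h₂ : cm s₂ = cm s) (h : ∀ i ∈ freshTimes s, s₁ i = s₂ i) :
    s₁ = s₂ := by
  refine eq_of_pos_eq fun i => ?_
  induction i using Nat.strong_induction_on with
  | _ i ih =>
    rcases i with _ | i
    · simp [pos_zero]
    intro hi
    by_cases hf : (⟨i, hi⟩ : Fin N) ∈ freshTimes s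
    · rw [pos_succ s₁ hi, pos_succ s₂ hi, ih i (by omega) (by omega), h _ hf]
    · simp only [freshTimes, mem_filter, mem_univ, true_and, not_forall, not_not] at hf
      obtain ⟨j, hj, hpos⟩ := hf
      rw [(pos_eq_pos_iff_of_cm_eq h₁ hi (by omega)).2 hpos,
        (pos_eq_pos_iff_of_cm_eq h₂ hi (by omega)).2 hpos, ih j (by omega) (by omega)]

lemma degC_le_pow_card_freshTimes (s : Fin N → Fin n × Bool) :
    degC s ≤ (2 * n) ^ #(freshTimes s) := by
  have hcard : Fintype.card (freshTimes s → Fin n × Bool) = (2 * n) ^ #(freshTimes s) := by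
    simp [mul_comm]
  rw [degC, ← hcard, ← card_univ]
  refine card_le_card_of_injOn (fun s' i => s' i) (fun _ _ => mem_univ _) ?_
  intro s₁ h₁ s₂ h₂ hfun
  simp only [coe_filter, Set.mem_ofPred_eq, mem_univ, true_and] at h₁ h₂
  exact eq_of_cm_eq_of_eqOn_freshTimes h₁ h₂ fun i hi => congrFun hfun ⟨i, hi⟩

lemma degC_le_pow_rangeRW (hn : 0 < n) (s : Fin N → Fin n × Bool) :
    degC s ≤ (2 * n) ^ rangeRW s :=
  (degC_le_pow_card_freshTimes s).trans
    (Nat.pow_le_pow_right (by omega) (card_freshTimes_le_rangeRW s))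

lemma card_rangeRW_le_le_mul_W (hn : 0 < n) (r : ℕ) :
    #(univ.filter fun s : Fin N → Fin n × Bool => rangeRW s ≤ r) ≤ (2 * n) ^ r * W n N := by
  set S := univ.filter fun s : Fin N → Fin n × Bool => rangeRW s ≤ r
  have hfiber : ∀ C ∈ S.image cm, #(S.filter fun s => cm s = C) ≤ (2 * n) ^ r := by
    intro C hC
    obtain ⟨s₀, hs₀, rfl⟩ := mem_image.1 hC
    calc #(S.filter fun s => cm s = cm s₀)
        ≤ degC s₀ := card_le_card fun s hs => by simp_all
      _ ≤ (2 * n) ^ rangeRW s₀ := degC_le_pow_rangeRW hn s₀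
      _ ≤ (2 * n) ^ r := Nat.pow_le_pow_right (by omega) (mem_filter.1 hs₀).2
  calc #S ≤ (2 * n) ^ r * #(S.image cm) := card_le_mul_card_image S _ hfiber
    _ ≤ (2 * n) ^ r * W n N :=
      Nat.mul_le_mul_left _ (card_le_card (image_subset_image (subset_univ S)))

end Degeneracy

section Concat

variable {α : Type*} {m ℓ r : ℕ}

def concatBlocks (w : Fin m → Fin ℓ → α) (t : Fin r → α) : Fin (m * ℓ + r) → α :=
  Fin.append (Function.uncurry w ∘ finProdFinEquiv.symm) t

lemma concatBlocks_block (w : Fin m → Fin ℓ → α) (t : Fin r → α) (b : Fin m) (o : Fin ℓ)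
    (h : ℓ * b + o < m * ℓ + r) : concatBlocks w t ⟨ℓ * b + o, h⟩ = w b o := by
  have : (⟨ℓ * b + o, h⟩ : Fin (m * ℓ + r)) = Fin.castAdd r (finProdFinEquiv (b, o)) := by
    ext; simp [finProdFinEquiv, add_comm]
  rw [this, concatBlocks, Fin.append_left, Function.comp_apply, Equiv.symm_apply_apply,
    Function.uncurry_apply_pair]

lemma concatBlocks_tail (w : Fin m → Fin ℓ → α) (t : Fin r → α) (j : Fin r)
    (h : m * ℓ + j < m * ℓ + r) : concatBlocks w t ⟨m * ℓ + j, h⟩ = t j :=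
  Fin.append_right _ t j

lemma concatBlocks_injective :
    Function.Injective fun p : (Fin m → Fin ℓ → α) × (Fin r → α) => concatBlocks p.1 p.2 := by
  rintro ⟨w, t⟩ ⟨w', t'⟩ h
  have h' : ∀ k, concatBlocks w t k = concatBlocks w' t' k := congrFun h
  refine Prod.ext (funext₂ fun b o => ?_) (funext fun j => ?_)
  · have hb : ℓ * b + o < m * ℓ + r := by
      have := (finProdFinEquiv (b, o)).isLt
      simp only [finProdFinEquiv, Equiv.coe_fn_mk] at this
      omega
    have := h' ⟨ℓ * b + o, hb⟩
    rwa [concatBlocks_block, concatBlocks_block] at this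
  · have := h' ⟨m * ℓ + j, by omega⟩
    rwa [concatBlocks_tail, concatBlocks_tail] at this

end Concat

section ClosedBlocks

lemma exists_block_le_le {m ℓ r i : ℕ} (hr : r ≤ ℓ) (hi : i ≤ m * ℓ + r) :
    ∃ b ≤ m, ℓ * b ≤ i ∧ i ≤ ℓ * b + ℓ := by
  rcases Nat.eq_zero_or_pos ℓ with rfl | hℓ
  · exact ⟨0, by omega, by omega, by omega⟩
  rcases le_or_gt (i / ℓ) m with hq | hq
  · exact ⟨i / ℓ, hq, Nat.mul_div_le i ℓ, (Nat.lt_mul_div_succ i hℓ).le⟩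
  · refine ⟨m, le_rfl, (Nat.mul_le_mul_left ℓ hq.le).trans (Nat.mul_div_le i ℓ), ?_⟩
    rw [mul_comm]
    omega

variable {n m ℓ r : ℕ} (w : Fin m → Fin ℓ → Fin n × Bool) (t : Fin r → Fin n × Bool)

lemma pos_concatBlocks_mul (hw : ∀ b, ∑ o, stepVec n (w b o) = 0) {b : ℕ} (hb : b ≤ m) :
    pos (concatBlocks w t) (ℓ * b) = 0 := by
  induction b with
  | zero => simp [pos_zero]
  | succ b ih =>
    have hle : ℓ * b + ℓ ≤ m * ℓ + r := by
      have := Nat.mul_le_mul_left ℓ hb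
      rw [mul_add_one, mul_comm ℓ m] at this
      omega
    rw [mul_add_one, pos_add _ _ _ hle, ih (by omega), zero_add, ← hw ⟨b, hb⟩]
    exact sum_congr rfl fun o _ => congrArg _ (concatBlocks_block w t ⟨b, hb⟩ o _)

lemma abs_pos_concatBlocks_le (hw : ∀ b, ∑ o, stepVec n (w b o) = 0) (hr : r ≤ ℓ)
    {i : ℕ} (hi : i ≤ m * ℓ + r) (c : Fin n) : |pos (concatBlocks w t) i c| ≤ ℓ := by
  obtain ⟨b, hb, hbi, hib⟩ := exists_block_le_le hr hi
  have := abs_pos_sub_pos_le (concatBlocks w t) c hbi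
  rw [pos_concatBlocks_mul w t hw hb, Pi.zero_apply, sub_zero] at this
  exact this.trans (by omega)

lemma rangeRW_concatBlocks_le (hw : ∀ b, ∑ o, stepVec n (w b o) = 0) (hr : r ≤ ℓ) :
    rangeRW (concatBlocks w t) ≤ (2 * ℓ + 1) ^ n := by
  have hsub : univ.image (fun i : Fin (m * ℓ + r + 1) => pos (concatBlocks w t) i) ⊆
      Icc (-ℓ : Fin n → ℤ) ℓ := by
    intro x hx
    obtain ⟨i, -, rfl⟩ := mem_image.1 hx
    have := abs_pos_concatBlocks_le w t hw hr i.is_le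
    exact mem_Icc.2 ⟨fun c => neg_le_of_abs_le (this c), fun c => le_of_abs_le (this c)⟩
  refine (card_le_card hsub).trans (le_of_eq ?_)
  rw [Pi.card_Icc]
  simp only [Pi.neg_apply, Pi.natCast_apply, Int.card_Icc, sub_neg_eq_add, prod_const, card_univ,
    Fintype.card_fin]
  congr 1
  omega

end ClosedBlocks

section Diagonal

/-- The step of `ℤ²` whose rotated coordinates `x + y` and `x - y` are `±1` with signs `u`, `v`;
this identifies a walk on `ℤ²` with a pair of independent walks on `ℤ`. -/
def diagStep (u v : Bool) : Fin 2 × Bool := if u = v then (0, u) else (1, u)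

lemma diagStep_inj {u v u' v' : Bool} (h : diagStep u v = diagStep u' v') : u = u' ∧ v = v' := by
  revert u v u' v'; decide

lemma stepVec_diagStep_add (u v : Bool) :
    stepVec 2 (diagStep u v) 0 + stepVec 2 (diagStep u v) 1 = if u then 1 else -1 := by
  revert u v; decide

lemma stepVec_diagStep_sub (u v : Bool) :
    stepVec 2 (diagStep u v) 0 - stepVec 2 (diagStep u v) 1 = if v then 1 else -1 := by
  revert u v; decide

lemma sum_ite_mem_one_neg_one {k : ℕ} {T : Finset (Fin (2 * k))} (hT : #T = k) :
    ∑ o, (if o ∈ T then (1 : ℤ) else -1) = 0 := by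
  have hc : #(univ.filter fun o => o ∉ T) = k := by
    rw [filter_not, filter_mem_eq_inter, univ_inter, card_sdiff_of_subset (subset_univ T)]
    simp only [card_univ, Fintype.card_fin, hT]
    omega
  simp [sum_ite, hT, hc]

variable {k : ℕ}

/-- The sign patterns of the closed walks of length `2 * k` on `ℤ`. -/
abbrev HalfSet (k : ℕ) := {T : Finset (Fin (2 * k)) // #T = k}

def diagBlock (T : HalfSet k × HalfSet k) : Fin (2 * k) → Fin 2 × Bool :=
  fun o => diagStep (o ∈ T.1.1) (o ∈ T.2.1)

lemma diagBlock_injective : Function.Injective (diagBlock (k := k)) := by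
  intro T T' h
  have h' o := diagStep_inj (congrFun h o)
  simp only [decide_eq_decide] at h'
  exact Prod.ext (Subtype.ext <| Finset.ext fun o => (h' o).1)
    (Subtype.ext <| Finset.ext fun o => (h' o).2)

lemma sum_stepVec_diagBlock (T : HalfSet k × HalfSet k) : ∑ o, stepVec 2 (diagBlock T o) = 0 := by
  have hadd : ∑ o, stepVec 2 (diagBlock T o) 0 + ∑ o, stepVec 2 (diagBlock T o) 1 = 0 := by
    rw [← sum_add_distrib]
    simpa only [diagBlock, stepVec_diagStep_add, decide_eq_true_eq]
      using sum_ite_mem_one_neg_one T.1.2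
  have hsub : ∑ o, stepVec 2 (diagBlock T o) 0 - ∑ o, stepVec 2 (diagBlock T o) 1 = 0 := by
    rw [← sum_sub_distrib]
    simpa only [diagBlock, stepVec_diagStep_sub, decide_eq_true_eq]
      using sum_ite_mem_one_neg_one T.2.2
  have h₀ : ∑ o, stepVec 2 (diagBlock T o) 0 = 0 := by omega
  have h₁ : ∑ o, stepVec 2 (diagBlock T o) 1 = 0 := by omega
  ext c
  rw [Finset.sum_apply, Pi.zero_apply]
  fin_cases c
  exacts [h₀, h₁]

end Diagonal

lemma centralBinom_pow_mul_le_card_rangeRW_le {k r : ℕ} (m : ℕ) (hr : r ≤ 2 * k) :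
    Nat.centralBinom k ^ (2 * m) * 4 ^ r ≤
      #(univ.filter fun s : Fin (m * (2 * k) + r) → Fin 2 × Bool =>
        rangeRW s ≤ (4 * k + 1) ^ 2) := by
  let walk (d : (Fin m → HalfSet k × HalfSet k) × (Fin r → Fin 2 × Bool)) :
      Fin (m * (2 * k) + r) → Fin 2 × Bool :=
    concatBlocks (diagBlock ∘ d.1) d.2
  have hwalk : Function.Injective walk := by
    intro d d' h
    obtain ⟨h₁, h₂⟩ := Prod.ext_iff.1 (concatBlocks_injective (a₁ := (_, d.2)) (a₂ := (_, d'.2)) h)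
    exact Prod.ext (funext fun b => diagBlock_injective (congrFun h₁ b)) h₂
  have hcard : Fintype.card ((Fin m → HalfSet k × HalfSet k) × (Fin r → Fin 2 × Bool)) =
      Nat.centralBinom k ^ (2 * m) * 4 ^ r := by
    simp [Fintype.card_finset_len, Nat.centralBinom_eq_two_mul_choose, pow_mul, sq]
  rw [← hcard, ← card_univ]
  refine card_le_card_of_injOn walk (fun d _ => mem_filter.2 ⟨mem_univ _, ?_⟩) hwalk.injOn
  calc rangeRW (walk d) ≤ (2 * (2 * k) + 1) ^ 2 :=
        rangeRW_concatBlocks_le _ _ (fun b => sum_stepVec_diagBlock _) hr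
    _ = (4 * k + 1) ^ 2 := by ring

lemma four_pow_le_mul_W_two {k : ℕ} (hk : 0 < k) (m : ℕ) {r : ℕ} (hr : r ≤ 2 * k) :
    4 ^ (m * (2 * k) + r) ≤ (2 * k) ^ (2 * m) * (4 ^ (4 * k + 1) ^ 2 * W 2 (m * (2 * k) + r)) :=
  calc 4 ^ (m * (2 * k) + r) = (4 ^ k) ^ (2 * m) * 4 ^ r := by ring
    _ ≤ (2 * k * Nat.centralBinom k) ^ (2 * m) * 4 ^ r := by
      gcongr; exact Nat.four_pow_le_two_mul_self_mul_centralBinom k hk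
    _ = (2 * k) ^ (2 * m) * (Nat.centralBinom k ^ (2 * m) * 4 ^ r) := by ring
    _ ≤ (2 * k) ^ (2 * m) * (4 ^ (4 * k + 1) ^ 2 * W 2 (m * (2 * k) + r)) := by
      refine Nat.mul_le_mul_left _ ((centralBinom_pow_mul_le_card_rangeRW_le m hr).trans ?_)
      exact card_rangeRW_le_le_mul_W (by norm_num) _

lemma log_W_two_ge (N : ℕ) {k : ℕ} (hk : 0 < k) :
    N * Real.log 4 - (4 * k + 1) ^ 2 * Real.log 4 - N / k * Real.log (2 * k) ≤
      Real.log (W 2 N) := by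
  set m := N / (2 * k)
  have hN : m * (2 * k) + N % (2 * k) = N := Nat.div_add_mod' N (2 * k)
  have h := four_pow_le_mul_W_two hk m (Nat.mod_lt N (by omega)).le
  rw [hN] at h
  have hW : (0 : ℝ) < W 2 N := by exact_mod_cast W_pos two_pos N
  have hlog := Real.log_le_log (by positivity) (show ((4 ^ N : ℕ) : ℝ) ≤ _ from Nat.cast_le.2 h)
  push_cast at hlog
  rw [Real.log_pow, Real.log_mul (by positivity) (by positivity),
    Real.log_mul (by positivity) hW.ne', Real.log_pow, Real.log_pow] at hlog
  have hm : ((2 * m : ℕ) : ℝ) ≤ N / k := by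
    rw [le_div_iff₀ (by positivity)]
    calc ((2 * m : ℕ) : ℝ) * k = (m * (2 * k) : ℕ) := by push_cast; ring
      _ ≤ N := by exact_mod_cast (by omega)
  have hk1 : (1 : ℝ) ≤ k := by exact_mod_cast hk
  have hlog2k : 0 ≤ Real.log (2 * k) := Real.log_nonneg (by linarith)
  push_cast at hlog hm
  nlinarith [mul_le_mul_of_nonneg_right hm hlog2k]

lemma gammaRW_le_one {n N : ℕ} (hn : 0 < n) (hN : 0 < N) : gammaRW n N ≤ 1 := by
  have h2n : (1 : ℝ) < 2 * n := by
    have : (1 : ℝ) ≤ n := by exact_mod_cast hn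
    linarith
  rw [gammaRW, div_le_one (mul_pos (by exact_mod_cast hN) (Real.log_pos h2n)), ← Real.log_pow]
  exact Real.log_le_log (by exact_mod_cast W_pos hn N) (by exact_mod_cast W_le_pow n N)

lemma rpow_one_third_pow_three {x : ℝ} (hx : 0 ≤ x) : (x ^ ((1 : ℝ) / 3)) ^ 3 = x := by
  simpa [one_div] using Real.rpow_inv_natCast_pow (n := 3) hx (by norm_num)

lemma one_lt_log_four : 1 < Real.log 4 := by
  rw [Real.lt_log_iff_exp_lt (by norm_num)]
  exact Real.exp_one_lt_d9.trans (by norm_num)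

lemma log_W_two_ge_of_eight_le {N : ℕ} (hN : 8 ≤ N) :
    N * Real.log 4 - 27 * ((N : ℝ) ^ ((1 : ℝ) / 3)) ^ 2 * Real.log N * Real.log 4 ≤
      Real.log (W 2 N) := by
  set x := (N : ℝ) ^ ((1 : ℝ) / 3)
  have hN8 : (8 : ℝ) ≤ N := by exact_mod_cast hN
  have hx3 : x ^ 3 = N := rpow_one_third_pow_three (Nat.cast_nonneg N)
  have hx : 2 ≤ x := le_of_pow_le_pow_left₀ (n := 3) (by norm_num) (by positivity) (by linarith)
  -- blocks of length `2k` with `k ≈ N^{1/3}` balance the two losses `k²` and `(N / k) log k`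
  set k := ⌊x⌋₊
  have hk_le : (k : ℝ) ≤ x := Nat.floor_le (by positivity)
  have hk_gt : x < k + 1 := Nat.lt_floor_add_one x
  have hk : 0 < k := Nat.floor_pos.2 (by linarith)
  have hk1 : (1 : ℝ) ≤ k := by exact_mod_cast hk
  have hlog4 := one_lt_log_four
  have hlogN : Real.log 4 ≤ Real.log N := Real.log_le_log (by norm_num) (by linarith)
  have hsq : ((4 * k + 1) ^ 2 : ℝ) * Real.log 4 ≤ 25 * x ^ 2 * Real.log N * Real.log 4 := by
    have : ((4 * k + 1) ^ 2 : ℝ) ≤ 25 * x ^ 2 := by nlinarith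
    calc ((4 * k + 1) ^ 2 : ℝ) * Real.log 4 ≤ 25 * x ^ 2 * Real.log 4 := by gcongr
      _ ≤ 25 * x ^ 2 * Real.log 4 * Real.log N :=
        le_mul_of_one_le_right (by positivity) (by linarith)
      _ = 25 * x ^ 2 * Real.log N * Real.log 4 := by ring
  have hblocks : N / k * Real.log (2 * k) ≤ 2 * x ^ 2 * Real.log N * Real.log 4 := by
    have hNk : (N : ℝ) / k ≤ 2 * x ^ 2 := by
      rw [div_le_iff₀ (by positivity), ← hx3]
      nlinarith
    have hlog2k : Real.log (2 * k) ≤ Real.log N :=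
      Real.log_le_log (by positivity) (by nlinarith)
    have : 0 ≤ Real.log (2 * k) := Real.log_nonneg (by linarith)
    calc N / k * Real.log (2 * k) ≤ 2 * x ^ 2 * Real.log N := by gcongr
      _ ≤ 2 * x ^ 2 * Real.log N * Real.log 4 :=
        le_mul_of_one_le_right (by positivity) hlog4.le
  linarith [log_W_two_ge N hk]

lemma gammaRW_two_ge {N : ℕ} (hN : 8 ≤ N) :
    1 - 27 * Real.log N / (N : ℝ) ^ ((1 : ℝ) / 3) ≤ gammaRW 2 N := by
  have hbound := log_W_two_ge_of_eight_le hN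
  set x := (N : ℝ) ^ ((1 : ℝ) / 3)
  have hx : 0 < x := by positivity
  have hx3 : x ^ 3 = N := rpow_one_third_pow_three (Nat.cast_nonneg N)
  have hgamma : gammaRW 2 N = Real.log (W 2 N) / (N * Real.log 4) := by
    norm_num [gammaRW]
  have hexpand : (1 - 27 * Real.log N / x) * (N * Real.log 4) =
      N * Real.log 4 - 27 * x ^ 2 * Real.log N * Real.log 4 := by
    rw [← hx3]
    field_simp
  rwa [hgamma, le_div_iff₀ (by positivity), hexpand]

open Filter in
/-- For SRW on `ℤ²` there is a constant `κ > 0` such that for all large `N`,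
`γ_N ≥ 1 - κ ln N / N^{1/3}`; in particular `γ_N → 1`. -/
theorem gammaRW_two_lower_bound :
    ∃ κ : ℝ, 0 < κ ∧
      (∀ᶠ N : ℕ in atTop,
        gammaRW 2 N ≥ 1 - κ * Real.log N / (N : ℝ) ^ ((1 : ℝ) / 3)) ∧
      Tendsto (fun N => gammaRW 2 N) atTop (nhds 1) := by
  have hlower : ∀ᶠ N : ℕ in atTop, 1 - 27 * Real.log N / (N : ℝ) ^ ((1 : ℝ) / 3) ≤ gammaRW 2 N :=
    eventually_atTop.2 ⟨8, fun N hN => gammaRW_two_ge hN⟩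
  have hupper : ∀ᶠ N : ℕ in atTop, gammaRW 2 N ≤ 1 :=
    eventually_atTop.2 ⟨1, fun N hN => gammaRW_le_one two_pos hN⟩
  have hlim :
      Tendsto (fun N : ℕ => 1 - 27 * Real.log N / (N : ℝ) ^ ((1 : ℝ) / 3)) atTop (nhds 1) := by
    have h := ((isLittleO_log_rpow_atTop (by norm_num : (0 : ℝ) < 1 / 3)).tendsto_div_nhds_zero.comp
      tendsto_natCast_atTop_atTop).const_mul 27 |>.const_sub 1
    simpa [mul_div_assoc] using h
  exact ⟨27, by norm_num, hlower, tendsto_of_tendsto_of_tendsto_of_le_of_le' hlim tendsto_const_nhds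
    hlower hupper⟩
end

section
/- For any recurrent random walk on Z^n (in particular the simple random walk on Z^2), with uniform measure on walks of length N, the ratio δ_N = S_C/S of coarse-grained to fine-grained Shannon entropy satisfies δ_N ≥ 1 − E(R_N)/N, and hence δ_N → 1 as N → ∞ whenever E(R_N)/N → 0. -/
open Finset

/-!
Write `L = ln (2n)`. For the uniform measure the coarse-grained entropy is
`S_C = N L - E(ln deg C)`, where `deg C` counts the walks with contact matrix `C`. A walk is
determined by its contact matrix together with the directions of its "fresh" steps, those that
reach a site not visited before: every other step returns to an earlier position, which the
contact matrix names. There are at most `R_N` fresh steps, so `ln deg C ≤ R_N L`, whence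
`N L ≥ S_C ≥ (N - E R_N) L`; dividing by `N L` and squeezing gives the limit.
-/

section Walks

variable {n N : ℕ}

lemma stepVec_eq_pos_sub (s : Fin N → Fin n × Bool) (k : Fin N) :
    stepVec n (s k) = pos s (k + 1) - pos s k := by
  simp [pos_succ s k.isLt]

lemma cm_eq_true_iff (s : Fin N → Fin n × Bool) (i j : Fin (N + 1)) :
    cm s i j = true ↔ (i : ℕ) ≠ j ∧ pos s i = pos s j := by
  simp [cm]

/-- The steps `k` after which the walk stands on a site not visited at times `0, …, k`,
read off from the contact matrix so that all walks sharing it share these steps. -/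
def freshSteps (C : Fin (N + 1) → Fin (N + 1) → Bool) : Finset (Fin N) :=
  univ.filter fun k => ∀ j : Fin (N + 1), (j : ℕ) ≤ k → C k.succ j = false

lemma pos_succ_ne_of_mem_freshSteps {s : Fin N → Fin n × Bool} {k : Fin N}
    (hk : k ∈ freshSteps (cm s)) {j : Fin (N + 1)} (hj : (j : ℕ) ≤ k) :
    pos s (k + 1) ≠ pos s j := by
  intro h
  have hfalse := (mem_filter.1 hk).2 j hj
  rw [← Bool.not_eq_true, cm_eq_true_iff, Fin.val_succ] at hfalse
  exact hfalse ⟨by omega, h⟩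

lemma pos_eq_of_cm_eq {s t : Fin N → Fin n × Bool} (hC : cm s = cm t)
    (hfresh : ∀ k ∈ freshSteps (cm s), s k = t k) : ∀ i ≤ N, pos s i = pos t i := by
  intro i
  induction i using Nat.strong_induction_on with
  | _ i ih =>
  rcases i with _ | i
  · simp [pos_zero]
  intro hi
  replace hi : i < N := hi
  by_cases hk : (⟨i, hi⟩ : Fin N) ∈ freshSteps (cm s)
  · rw [pos_succ s hi, pos_succ t hi, ih i i.lt_succ_self hi.le, hfresh _ hk]
  · obtain ⟨j, hj, hCj⟩ :
        ∃ j : Fin (N + 1), (j : ℕ) ≤ i ∧ cm s (Fin.succ ⟨i, hi⟩) j = true := by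
      simpa [freshSteps] using hk
    have hs := (cm_eq_true_iff s _ j).1 hCj
    have ht := (cm_eq_true_iff t _ j).1 (hC ▸ hCj)
    calc pos s (i + 1) = pos s j := hs.2
      _ = pos t j := ih j (by omega) (by omega)
      _ = pos t (i + 1) := ht.2.symm

lemma eq_of_cm_eq_of_eqOn_freshSteps {s t : Fin N → Fin n × Bool} (hC : cm s = cm t)
    (hfresh : ∀ k ∈ freshSteps (cm s), s k = t k) : s = t := by
  have hpos := pos_eq_of_cm_eq hC hfresh
  funext k
  apply stepVec_injective n
  rw [stepVec_eq_pos_sub, stepVec_eq_pos_sub, hpos _ k.isLt, hpos _ k.isLt.le]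

lemma card_freshSteps_le_rangeRW (s : Fin N → Fin n × Bool) :
    (freshSteps (cm s)).card ≤ rangeRW s := by
  refine card_le_card_of_injOn (fun k : Fin N => pos s (k + 1))
    (fun k _ => mem_image.2 ⟨k.succ, mem_univ _, rfl⟩) ?_
  intro a ha b hb hab
  by_contra hne
  rcases lt_or_gt_of_ne (Fin.val_ne_of_ne hne) with h | h
  · exact pos_succ_ne_of_mem_freshSteps hb (j := a.succ) (by simp; omega) hab.symm
  · exact pos_succ_ne_of_mem_freshSteps ha (j := b.succ) (by simp; omega) hab

lemma degC_le_pow_card_freshSteps (s : Fin N → Fin n × Bool) :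
    degC s ≤ (2 * n) ^ (freshSteps (cm s)).card := by
  have hinj := card_le_card_of_injOn
    (fun t : Fin N → Fin n × Bool => fun k : freshSteps (cm s) => t k)
    (s := univ.filter fun t => cm t = cm s) (t := univ) (fun _ _ => mem_univ _)
    (fun a ha b hb hab => eq_of_cm_eq_of_eqOn_freshSteps
      ((mem_filter.1 ha).2.trans (mem_filter.1 hb).2.symm)
      (fun k hk => congrFun hab ⟨k, (mem_filter.1 ha).2 ▸ hk⟩))
  simpa [degC, Fintype.card_prod, mul_comm] using hinj

lemma log_degC_le (s : Fin N → Fin n × Bool) :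
    Real.log (degC s) ≤ rangeRW s * Real.log (2 * n) := by
  have hdeg : (degC s : ℝ) ≤ (2 * n) ^ (freshSteps (cm s)).card := by
    exact_mod_cast degC_le_pow_card_freshSteps s
  have hlog : 0 ≤ Real.log (2 * n) := by exact_mod_cast Real.log_natCast_nonneg (2 * n)
  calc Real.log (degC s) ≤ (freshSteps (cm s)).card * Real.log (2 * n) := by
        rw [← Real.log_pow]
        exact Real.log_le_log (by exact_mod_cast card_pos.2 ⟨s, by simp⟩) hdeg
    _ ≤ rangeRW s * Real.log (2 * n) := by
        gcongr
        exact_mod_cast card_freshSteps_le_rangeRW s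

end Walks

lemma Real.negMulLog_div (x y : ℝ) :
    Real.negMulLog (x / y) = x / y * (Real.log y - Real.log x) := by
  rcases eq_or_ne x 0 with rfl | hx
  · simp
  rcases eq_or_ne y 0 with rfl | hy
  · simp
  rw [Real.negMulLog, Real.log_div hx hy]
  ring

/-- Entropy of the image of the uniform distribution under `f`. -/
theorem sum_negMulLog_card_fiber_div_card {α β : Type*} [Fintype α] [Fintype β] [DecidableEq β]
    (f : α → β) :
    ∑ b, Real.negMulLog ((univ.filter fun a => f a = b).card / Fintype.card α)
      = Real.log (Fintype.card α)
        - (∑ a, Real.log (univ.filter fun a' => f a' = f a).card) / Fintype.card α := by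
  set Q : ℝ := (Fintype.card α : ℝ) with hQ
  calc ∑ b, Real.negMulLog ((univ.filter fun a => f a = b).card / Q)
      = ∑ b, ∑ _a ∈ univ.filter fun a => f a = b,
          (Real.log Q - Real.log (univ.filter fun a' => f a' = b).card) / Q := by
        refine sum_congr rfl fun b _ => ?_
        rw [sum_const, nsmul_eq_mul, Real.negMulLog_div, mul_div_assoc', div_mul_eq_mul_div]
    _ = ∑ a, (Real.log Q - Real.log (univ.filter fun a' => f a' = f a).card) / Q :=
        sum_fiberwise' univ f _
    _ = _ := by
        rw [← sum_div, sum_sub_distrib, sum_const, card_univ, nsmul_eq_mul, ← hQ, sub_div,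
          mul_div_cancel_left_of_imp fun h0 => by simp [h0]]

lemma card_walks (n N : ℕ) : (Fintype.card (Fin N → Fin n × Bool) : ℝ) = (2 * n) ^ N := by
  simp [Fintype.card_prod, mul_comm]

/-- For the uniform measure, `S_C = S - E(ln deg C)` with `S = N ln (2n)`. -/
lemma SC_eq (n N : ℕ) :
    SC n N = N * Real.log (2 * n)
      - (∑ s : Fin N → Fin n × Bool, Real.log (degC s)) / (2 * n) ^ N := by
  rw [SC, ← card_walks, sum_negMulLog_card_fiber_div_card, card_walks, Real.log_pow]
  rfl

lemma SC_le (n N : ℕ) : SC n N ≤ N * Real.log (2 * n) := by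
  rw [SC_eq]
  exact sub_le_self _ (div_nonneg (sum_nonneg fun s _ => Real.log_natCast_nonneg _) (by positivity))

lemma sub_ER_mul_log_le_SC (n N : ℕ) : (N - ER n N) * Real.log (2 * n) ≤ SC n N := by
  rw [SC_eq, ER, sub_mul, div_mul_eq_mul_div, sum_mul]
  gcongr with s
  exact log_degC_le s

lemma one_sub_ER_div_le_deltaRW {n N : ℕ} (hn : 1 ≤ n) (hN : 1 ≤ N) :
    1 - ER n N / N ≤ deltaRW n N := by
  have hL : 0 < Real.log (2 * n) := Real.log_pos (by norm_cast; omega)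
  have hN' : (0 : ℝ) < N := by exact_mod_cast hN
  rw [deltaRW, le_div_iff₀ (by positivity)]
  calc (1 - ER n N / N) * (N * Real.log (2 * n)) = (N - ER n N) * Real.log (2 * n) := by
        field_simp
    _ ≤ SC n N := sub_ER_mul_log_le_SC n N

lemma deltaRW_le_one (n N : ℕ) : deltaRW n N ≤ 1 :=
  div_le_one_of_le₀ (SC_le n N)
    (mul_nonneg N.cast_nonneg (by exact_mod_cast Real.log_natCast_nonneg (2 * n)))

open Filter in
/-- With the uniform measure on walks of length `N` on `ℤ^n`, the ratio
`δ_N = S_C / S` satisfies `δ_N ≥ 1 - E(R_N)/N`; hence `δ_N → 1` whenever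
`E(R_N)/N → 0` (e.g. for recurrent walks such as SRW on `ℤ²`). -/
theorem deltaRW_ge_one_sub_expected_range (n : ℕ) (hn : 1 ≤ n) :
    (∀ N : ℕ, 1 ≤ N → deltaRW n N ≥ 1 - ER n N / N) ∧
      (Tendsto (fun N => ER n N / N) atTop (nhds 0) →
        Tendsto (fun N => deltaRW n N) atTop (nhds 1)) := by
  refine ⟨fun N hN => one_sub_ER_div_le_deltaRW hn hN, fun hER => ?_⟩
  have hlower : Tendsto (fun N => 1 - ER n N / N) atTop (nhds 1) := by
    simpa using tendsto_const_nhds.sub hER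
  refine tendsto_of_tendsto_of_tendsto_of_le_of_le' hlower tendsto_const_nhds ?_
    (Eventually.of_forall (deltaRW_le_one n))
  filter_upwards [eventually_ge_atTop 1] with N hN using one_sub_ER_div_le_deltaRW hn hN
end
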